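/- arXiv:2508.18809 — 3 statements merged into one kernel-verified Lean document; each statement's English description precedes it below -/
import Mathlib

section
/- Let $a, \gamma > 0$ and let $f : (0,\infty) \to (0,\infty)$ be differentiable and satisfy the ODE $f'(r) = \frac{a}{r}\left(1 - C_r (r^{-a} f(r))^{\gamma} + \delta_r\right) f(r)$ for all $r \geq 1$, where $r \mapsto C_r$ is a continuous function converging to a positive limit $C$ as $r \to \infty$, and $r \mapsto \delta_r$ is a logarithmically integrable error function. Then $f(r) \sim (a \gamma C \log r)^{-1/\gamma}\, r^{a}$ as $r \to \infty$. -/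
open Real Filter MeasureTheory

/-- A logarithmically integrable error function: measurable, tending to zero at infinity,
with `|δ r| / r` integrable on `[r₀, ∞)` for some `r₀`. -/
def LogIntegrableError (δ : ℝ → ℝ) : Prop :=
  Measurable δ ∧ Tendsto δ atTop (nhds 0) ∧
    ∃ r₀ : ℝ, IntegrableOn (fun r => |δ r| / r) (Set.Ici r₀) volume

/-!
The substitution `v r = (r ^ (-a) * f r) ^ (-γ)` linearises the equation:
`v' = a γ C_r / r - a γ (δ_r / r) v`. Beyond a point `R₀` where `∫_{R₀}^∞ |δ_r| / r` is small,
the perturbation moves `v` by at most a small multiple of its running maximum, which is itself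
controlled by `v R₀ + ∫_{R₀}^r a γ C_t / t`. Hence `v r ~ ∫^r a γ C_t / t ~ a γ C log r`, and
undoing the substitution gives the claim.
-/

open Set Asymptotics

lemma isLittleO_of_abs_le_const_add_mul {α : Type*} {l : Filter α} {u w : α → ℝ}
    (hw : Tendsto w l atTop) (h : ∀ ε > 0, ∃ K, ∀ᶠ x in l, |u x| ≤ K + ε * w x) :
    u =o[l] w := by
  refine isLittleO_iff.2 fun c hc => ?_
  obtain ⟨K, hK⟩ := h (c / 2) (half_pos hc)
  filter_upwards [hK, hw.eventually_ge_atTop (2 * K / c), hw.eventually_ge_atTop 0]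
    with x hux hwK hw0
  rw [Real.norm_eq_abs, Real.norm_eq_abs, abs_of_nonneg hw0]
  have : K ≤ c / 2 * w x := by
    rw [div_le_iff₀ hc] at hwK
    linarith
  linarith

lemma abs_intervalIntegral_mul_le {h v : ℝ → ℝ} {a b M : ℝ} (hab : a ≤ b)
    (hh : IntegrableOn h (Ici a)) (hM : ∀ t ∈ Icc a b, |v t| ≤ M) :
    |∫ t in a..b, h t * v t| ≤ (∫ t in Ici a, |h t|) * M := by
  have hM0 : 0 ≤ M := (abs_nonneg _).trans (hM a ⟨le_rfl, hab⟩)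
  have hh' : IntervalIntegrable (fun t => |h t|) volume a b :=
    (intervalIntegrable_iff_integrableOn_Icc_of_le hab).2 (hh.mono_set Icc_subset_Ici_self).abs
  calc |∫ t in a..b, h t * v t| ≤ ∫ t in a..b, |h t| * M := by
        refine intervalIntegral.norm_integral_le_of_norm_le (f := fun t => h t * v t) hab
          (ae_of_all _ fun t ht => ?_) (hh'.mul_const M)
        rw [Real.norm_eq_abs, abs_mul]
        exact mul_le_mul_of_nonneg_left (hM t (Ioc_subset_Icc_self ht)) (abs_nonneg _)
    _ = (∫ t in Ioc a b, |h t|) * M := by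
        rw [intervalIntegral.integral_mul_const, intervalIntegral.integral_of_le hab]
    _ ≤ (∫ t in Ici a, |h t|) * M := by
        refine mul_le_mul_of_nonneg_right ?_ hM0
        exact setIntegral_mono_set hh.abs (ae_of_all _ fun _ => abs_nonneg _)
          (Ioc_subset_Ioi_self.trans Ioi_subset_Ici_self).eventuallyLE

section PerturbedLinearGrowth

variable {v g h : ℝ → ℝ} {R : ℝ}

lemma abs_sub_integral_le_of_hasDerivAt (hv : ∀ t ≥ R, HasDerivAt v (g t - h t * v t) t)
    (hv_pos : ∀ t ≥ R, 0 < v t) (hg : ContinuousOn g (Ici R)) (hg_nonneg : ∀ t ≥ R, 0 ≤ g t)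
    (hh : IntegrableOn h (Ici R)) {ε : ℝ} (hε : ∫ t in Ici R, |h t| ≤ ε) (hε1 : ε < 1)
    {r : ℝ} (hr : R ≤ r) :
    |v r - (v R + ∫ t in R..r, g t)| ≤ ε / (1 - ε) * (v R + ∫ t in R..r, g t) := by
  have hv_cont : ∀ s, ContinuousOn v (Icc R s) := fun s t ht =>
    (hv t ht.1).continuousAt.continuousWithinAt
  have hg_int : ∀ s ≥ R, IntervalIntegrable g volume R s := fun s hs =>
    (hg.mono Icc_subset_Ici_self).intervalIntegrable_of_Icc hs
  have hftc : ∀ s ≥ R, v s - (v R + ∫ t in R..s, g t) = -∫ t in R..s, h t * v t := by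
    intro s hs
    have hhv : IntervalIntegrable (fun t => h t * v t) volume R s :=
      (intervalIntegrable_iff_integrableOn_Icc_of_le hs).2 <|
        (hh.mono_set Icc_subset_Ici_self).mul_continuousOn (hv_cont s) isCompact_Icc
    have := intervalIntegral.integral_eq_sub_of_hasDerivAt
      (fun t ht => hv t (uIcc_of_le hs ▸ ht).1) ((hg_int s hs).sub hhv)
    rw [intervalIntegral.integral_sub (hg_int s hs) hhv] at this
    linarith
  obtain ⟨t₀, ht₀, hmax⟩ := isCompact_Icc.exists_isMaxOn ⟨R, le_rfl, hr⟩ (hv_cont r)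
  have hε0 : 0 ≤ ε := (setIntegral_nonneg measurableSet_Ici fun _ _ => abs_nonneg _).trans hε
  have hdev : ∀ s ∈ Icc R r, |v s - (v R + ∫ t in R..s, g t)| ≤ ε * v t₀ := by
    intro s hs
    rw [hftc s hs.1, abs_neg]
    refine (abs_intervalIntegral_mul_le hs.1 hh fun t ht => ?_).trans
      (mul_le_mul_of_nonneg_right hε (hv_pos t₀ ht₀.1).le)
    rw [abs_of_pos (hv_pos t ht.1)]
    exact hmax ⟨ht.1, ht.2.trans hs.2⟩
  have hmono : ∫ t in R..t₀, g t ≤ ∫ t in R..r, g t :=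
    intervalIntegral.integral_mono_interval le_rfl ht₀.1 ht₀.2
      ((ae_restrict_iff' measurableSet_Ioc).2 (ae_of_all _ fun t ht => hg_nonneg t ht.1.le))
      (hg_int r hr)
  -- Evaluating the deviation bound at the maximiser controls the maximum itself.
  have hmax_le : v t₀ ≤ (v R + ∫ t in R..r, g t) / (1 - ε) := by
    rw [le_div_iff₀ (sub_pos.2 hε1)]
    linarith [(abs_le.1 (hdev t₀ ht₀)).2]
  calc |v r - (v R + ∫ t in R..r, g t)| ≤ ε * v t₀ := hdev r ⟨hr, le_rfl⟩
    _ ≤ ε * ((v R + ∫ t in R..r, g t) / (1 - ε)) := mul_le_mul_of_nonneg_left hmax_le hε0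
    _ = ε / (1 - ε) * (v R + ∫ t in R..r, g t) := by ring

theorem isEquivalent_integral_of_hasDerivAt (hv : ∀ t ≥ R, HasDerivAt v (g t - h t * v t) t)
    (hv_pos : ∀ t ≥ R, 0 < v t) (hg : ContinuousOn g (Ici R))
    (hg_nonneg : ∀ᶠ t in atTop, 0 ≤ g t)
    (hg_top : Tendsto (fun r => ∫ t in R..r, g t) atTop atTop) (hh : IntegrableOn h (Ici R)) :
    v ~[atTop] fun r => ∫ t in R..r, g t := by
  refine isLittleO_of_abs_le_const_add_mul hg_top fun c hc => ?_
  set ε := min (c / 2) (1 / 2)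
  have hε : 0 < ε := lt_min (half_pos hc) one_half_pos
  have hεc : ε / (1 - ε) ≤ c := by
    rw [div_le_iff₀ (by linarith [min_le_right (c / 2) (1 / 2)])]
    nlinarith [min_le_left (c / 2) (1 / 2), min_le_right (c / 2) (1 / 2)]
  obtain ⟨R₀, hR₀, hg₀, htail⟩ : ∃ R₀, R ≤ R₀ ∧ (∀ t ≥ R₀, 0 ≤ g t) ∧
      ∫ t in Ici R₀, |h t| ≤ ε :=
    ((eventually_ge_atTop R).and ((eventually_forall_ge_atTop.2 hg_nonneg).and
      ((tendsto_integral_Ici_zero tendsto_id).eventually (eventually_le_nhds hε)))).exists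
  set K := |v R₀ - ∫ t in R..R₀, g t|
  refine ⟨(1 + c) * K, ?_⟩
  filter_upwards [eventually_ge_atTop R₀] with r hr
  have hdev := abs_sub_integral_le_of_hasDerivAt (fun t ht => hv t (hR₀.trans ht))
    (fun t ht => hv_pos t (hR₀.trans ht)) (hg.mono (Ici_subset_Ici.2 hR₀)) hg₀
    (hh.mono_set (Ici_subset_Ici.2 hR₀)) htail (by linarith [min_le_right (c / 2) (1 / 2)]) hr
  have hsplit : ∫ t in R₀..r, g t = (∫ t in R..r, g t) - ∫ t in R..R₀, g t :=
    (intervalIntegral.integral_interval_sub_left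
      ((hg.mono Icc_subset_Ici_self).intervalIntegrable_of_Icc (hR₀.trans hr))
      ((hg.mono Icc_subset_Ici_self).intervalIntegrable_of_Icc hR₀)).symm
  have hV : 0 ≤ v R₀ + ∫ t in R₀..r, g t :=
    add_nonneg (hv_pos R₀ hR₀).le <| intervalIntegral.integral_nonneg hr fun t ht => hg₀ t ht.1
  have hVK : v R₀ + ∫ t in R₀..r, g t ≤ K + ∫ t in R..r, g t := by
    rw [hsplit]; linarith [le_abs_self (v R₀ - ∫ t in R..R₀, g t)]
  have hdev' : |v r - (v R₀ + ∫ t in R₀..r, g t)| ≤ c * (K + ∫ t in R..r, g t) :=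
    hdev.trans ((mul_le_mul_of_nonneg_right hεc hV).trans (mul_le_mul_of_nonneg_left hVK hc.le))
  calc |(v - fun r => ∫ t in R..r, g t) r|
      = |(v r - (v R₀ + ∫ t in R₀..r, g t)) + (v R₀ - ∫ t in R..R₀, g t)| := by
        rw [hsplit, Pi.sub_apply]; ring_nf
    _ ≤ c * (K + ∫ t in R..r, g t) + K := (abs_add_le _ _).trans (add_le_add hdev' le_rfl)
    _ = (1 + c) * K + c * ∫ t in R..r, g t := by ring

end PerturbedLinearGrowth

lemma abs_integral_div_sub_mul_log_le {C : ℝ → ℝ} {L ε a b : ℝ} (ha : 0 < a) (hab : a ≤ b)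
    (hCc : ContinuousOn C (Icc a b)) (hC : ∀ t ∈ Icc a b, |C t - L| ≤ ε) :
    |(∫ t in a..b, C t / t) - L * log (b / a)| ≤ ε * log (b / a) := by
  have h0 : (0 : ℝ) ∉ uIcc a b := by
    rw [uIcc_of_le hab]; exact fun h => ha.not_ge h.1
  have hint : ∀ c : ℝ, ContinuousOn (fun t => c / t) (uIcc a b) := fun c =>
    continuousOn_const.div continuousOn_id fun t ht => ne_of_mem_of_not_mem ht h0
  have hlog : ∀ c : ℝ, ∫ t in a..b, c / t = c * log (b / a) := fun c => by
    simp_rw [div_eq_mul_one_div c]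
    rw [intervalIntegral.integral_const_mul, integral_one_div h0]
  have hCi : IntervalIntegrable (fun t => C t / t) volume a b :=
    (hCc.div continuousOn_id fun t ht => (ha.trans_le ht.1).ne').intervalIntegrable_of_Icc hab
  rw [← hlog, ← hlog, ← intervalIntegral.integral_sub hCi (hint L).intervalIntegrable]
  refine intervalIntegral.norm_integral_le_of_norm_le (f := fun t => C t / t - L / t) hab
    (ae_of_all _ fun t ht => ?_) ((hint ε).intervalIntegrable (μ := volume))
  have ht0 : 0 < t := ha.trans ht.1
  rw [Real.norm_eq_abs, div_sub_div_same, abs_div, abs_of_pos ht0]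
  exact div_le_div_of_nonneg_right (hC t (Ioc_subset_Icc_self ht)) ht0.le

theorem isEquivalent_integral_div_mul_log {C : ℝ → ℝ} {L R : ℝ} (hR : 0 < R)
    (hC : ContinuousOn C (Ici R)) (hL : L ≠ 0) (hlim : Tendsto C atTop (nhds L)) :
    (fun r => ∫ t in R..r, C t / t) ~[atTop] fun r => L * log r := by
  refine IsLittleO.isEquivalent <| (isLittleO_const_mul_right_iff hL).2 <|
    isLittleO_of_abs_le_const_add_mul tendsto_log_atTop fun ε hε => ?_
  obtain ⟨R₁, hR₁, hR₁1, hCε⟩ : ∃ R₁, R ≤ R₁ ∧ 1 ≤ R₁ ∧ ∀ t ≥ R₁, |C t - L| ≤ ε :=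
    ((eventually_ge_atTop R).and ((eventually_ge_atTop 1).and (eventually_forall_ge_atTop.2
      ((hlim.eventually (Metric.closedBall_mem_nhds L hε)).mono fun _ ht => ht)))).exists
  refine ⟨|(∫ t in R..R₁, C t / t) - L * log R₁|, ?_⟩
  filter_upwards [eventually_ge_atTop R₁] with r hr
  have hR₁0 : 0 < R₁ := hR.trans_le hR₁
  have hint : ∀ s ≥ R, IntervalIntegrable (fun t => C t / t) volume R s := fun s hs =>
    ((hC.mono Icc_subset_Ici_self).div continuousOn_id
      fun t ht => (hR.trans_le ht.1).ne').intervalIntegrable_of_Icc hs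
  have htail := abs_integral_div_sub_mul_log_le hR₁0 hr
    ((hC.mono (Ici_subset_Ici.2 hR₁)).mono Icc_subset_Ici_self) fun t ht => hCε t ht.1
  rw [log_div (hR₁0.trans_le hr).ne' hR₁0.ne',
    ← intervalIntegral.integral_interval_sub_left (hint r (hR₁.trans hr)) (hint R₁ hR₁)] at htail
  calc |(∫ t in R..r, C t / t) - L * log r|
      = |((∫ t in R..R₁, C t / t) - L * log R₁)
          + ((∫ t in R..r, C t / t) - (∫ t in R..R₁, C t / t) - L * (log r - log R₁))| := by
        ring_nf
    _ ≤ |(∫ t in R..R₁, C t / t) - L * log R₁| + ε * (log r - log R₁) :=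
        (abs_add_le _ _).trans (add_le_add le_rfl htail)
    _ ≤ |(∫ t in R..R₁, C t / t) - L * log R₁| + ε * log r := by
        gcongr; linarith [log_nonneg hR₁1]

lemma hasDerivAt_rpow_neg_mul_rpow_neg {f : ℝ → ℝ} {a γ c d r : ℝ} (hr : 0 < r) (hf : 0 < f r)
    (hode : HasDerivAt f ((a / r) * (1 - c * (r ^ (-a) * f r) ^ γ + d) * f r) r) :
    HasDerivAt (fun t => (t ^ (-a) * f t) ^ (-γ))
      (a * γ * (c / r) - a * γ * (d / r) * (r ^ (-a) * f r) ^ (-γ)) r := by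
  have hu : 0 < r ^ (-a) * f r := mul_pos (rpow_pos_of_pos hr _) hf
  have hdu := ((hasDerivAt_rpow_const (p := -a) (Or.inl hr.ne')).mul hode).rpow_const
    (p := -γ) (Or.inl hu.ne')
  refine hdu.congr_deriv ?_
  have hpow : r ^ (-a - 1) = r ^ (-a) * r⁻¹ := by
    rw [rpow_sub_one hr.ne', div_eq_mul_inv]
  have hu_succ : (r ^ (-a) * f r) * (r ^ (-a) * f r) ^ (-γ - 1) = (r ^ (-a) * f r) ^ (-γ) := by
    rw [mul_comm, rpow_sub_one hu.ne', div_mul_cancel₀ _ hu.ne']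
  have hu_inv : (r ^ (-a) * f r) ^ γ * (r ^ (-a) * f r) ^ (-γ) = 1 := by
    rw [← rpow_add hu, add_neg_cancel, rpow_zero]
  simp only [Pi.mul_apply]
  rw [hpow]
  linear_combination (a * γ / r) * ((c * (r ^ (-a) * f r) ^ γ - d) * hu_succ + c * hu_inv)

lemma LogIntegrableError.eventually_integrableOn_div {δ : ℝ → ℝ} (hδ : LogIntegrableError δ) :
    ∀ᶠ R in atTop, IntegrableOn (fun t => δ t / t) (Ici R) := by
  obtain ⟨hδ_meas, -, r₀, hδ_int⟩ := hδ
  filter_upwards [eventually_ge_atTop r₀, eventually_gt_atTop 0] with R hR hR0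
  refine (hδ_int.mono_set (Ici_subset_Ici.2 hR)).mono'
    (by fun_prop : Measurable fun t => δ t / t).aestronglyMeasurable ?_
  filter_upwards [ae_restrict_mem measurableSet_Ici] with t ht
  rw [Real.norm_eq_abs, abs_div, abs_of_pos (hR0.trans_le ht)]

lemma tendsto_div_rpow_mul_rpow_of_tendsto {f L : ℝ → ℝ} {a γ : ℝ} (hγ : γ ≠ 0)
    (hf : ∀ᶠ r in atTop, 0 < f r) (hL : ∀ᶠ r in atTop, 0 < L r)
    (h : Tendsto (fun r => (r ^ (-a) * f r) ^ (-γ) / L r) atTop (nhds 1)) :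
    Tendsto (fun r => f r / (L r ^ (-1 / γ) * r ^ a)) atTop (nhds 1) := by
  have hpow := h.rpow_const (p := -1 / γ) (Or.inl one_ne_zero)
  rw [one_rpow] at hpow
  refine hpow.congr' ?_
  filter_upwards [hf, hL, eventually_gt_atTop 0] with r hfr hLr hr
  have hu : 0 < r ^ (-a) * f r := mul_pos (rpow_pos_of_pos hr _) hfr
  rw [div_rpow (rpow_pos_of_pos hu _).le hLr.le, ← rpow_mul hu.le,
    show -γ * (-1 / γ) = 1 by field_simp, rpow_one, rpow_neg hr.le]
  field_simp [(rpow_pos_of_pos hr a).ne']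

theorem ode_log_correction (a γ : ℝ) (ha : 0 < a) (hγ : 0 < γ)
    (f : ℝ → ℝ) (hf_pos : ∀ r > (0:ℝ), 0 < f r)
    (C : ℝ → ℝ) (hC_cont : Continuous C) (Clim : ℝ) (hClim_pos : 0 < Clim)
    (hC : Tendsto C atTop (nhds Clim))
    (δ : ℝ → ℝ) (hδ : LogIntegrableError δ)
    (hode : ∀ r ≥ (1:ℝ), HasDerivAt f
      ((a / r) * (1 - C r * (r ^ (-a) * f r) ^ γ + δ r) * f r) r) :
    Tendsto (fun r => f r / ((a * γ * Clim * Real.log r) ^ (-1 / γ) * r ^ a))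
      atTop (nhds 1) := by
  obtain ⟨R, hR1, hδR⟩ := ((eventually_ge_atTop 1).and hδ.eventually_integrableOn_div).exists
  have hR : 0 < R := one_pos.trans_le hR1
  set v : ℝ → ℝ := fun r => (r ^ (-a) * f r) ^ (-γ)
  have hv : ∀ t ≥ R, HasDerivAt v (a * γ * (C t / t) - a * γ * (δ t / t) * v t) t :=
    fun t ht => hasDerivAt_rpow_neg_mul_rpow_neg (hR.trans_le ht) (hf_pos t (hR.trans_le ht))
      (hode t (hR1.trans ht))
  have hv_pos : ∀ t ≥ R, 0 < v t := fun t ht =>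
    rpow_pos_of_pos (mul_pos (rpow_pos_of_pos (hR.trans_le ht) _) (hf_pos t (hR.trans_le ht))) _
  have hlog : (fun r => ∫ t in R..r, a * γ * (C t / t)) ~[atTop]
      fun r => a * γ * Clim * log r := by
    simp_rw [intervalIntegral.integral_const_mul, mul_assoc (a * γ)]
    exact IsEquivalent.refl.mul
      (isEquivalent_integral_div_mul_log hR hC_cont.continuousOn hClim_pos.ne' hC)
  have hL_top : Tendsto (fun r => a * γ * Clim * log r) atTop atTop :=
    tendsto_log_atTop.const_mul_atTop (by positivity)
  have hg_nonneg : ∀ᶠ t in atTop, 0 ≤ a * γ * (C t / t) := by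
    filter_upwards [hC.eventually (eventually_ge_nhds hClim_pos), eventually_gt_atTop 0]
      with t hCt ht
    exact mul_nonneg (by positivity) (div_nonneg hCt ht.le)
  have hg_cont : ContinuousOn (fun t => a * γ * (C t / t)) (Ici R) :=
    continuousOn_const.mul (hC_cont.continuousOn.div continuousOn_id
      fun t ht => (hR.trans_le ht).ne')
  refine tendsto_div_rpow_mul_rpow_of_tendsto hγ.ne' (eventually_gt_atTop 0 |>.mono hf_pos)
    (hL_top.eventually_gt_atTop 0) ?_
  exact (isEquivalent_iff_tendsto_one (hL_top.eventually_gt_atTop 0 |>.mono fun _ h => h.ne')).1 <|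
    (isEquivalent_integral_of_hasDerivAt hv hv_pos hg_cont hg_nonneg
      (hlog.symm.tendsto_atTop hL_top) (hδR.const_mul (a * γ))).trans hlog
end

section
/- Let $f : (0,\infty) \to (0,\infty)$ be an increasing function with $f(r) \leq C r^C$ for some constant $C \geq 1$ and all $r \geq 1$. For each $\lambda \geq 1$, define $A(\lambda) := \{k \in \mathbb{N} : f(4r) \leq \lambda f(r) \text{ for all } r \in [2^k, 2^{k+2}]\}$. Then the lower density of $A(\lambda)$, i.e. $\liminf_{N \to \infty} \frac{1}{N}|A(\lambda) \cap \{1, \ldots, N\}|$, is at least $1 - \frac{4C \log 2}{\log \lambda}$ for every $\lambda > 1$. -/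
open Real Filter
open scoped Classical

private lemma pow_mono_f (f : ℝ → ℝ) (hf_mono : MonotoneOn f (Set.Ioi 0))
    {a b : ℕ} (h : a ≤ b) : f (2 ^ a) ≤ f (2 ^ b) :=
  hf_mono (Set.mem_Ioi.2 (by positivity)) (Set.mem_Ioi.2 (by positivity))
    (pow_le_pow_right₀ one_le_two h)

private lemma chain_lemma (f : ℝ → ℝ) (hf_mono : MonotoneOn f (Set.Ioi 0))
    (lam : ℝ) (hlam : 1 < lam) :
    ∀ S : Finset ℕ, ∀ N : ℕ,
    (∀ k ∈ S, 1 ≤ k ∧ lam * f (2 ^ k) ≤ f (2 ^ (k + 4))) →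
    (∀ k ∈ S, ∀ k' ∈ S, k < k' → k + 4 ≤ k') →
    (∀ k ∈ S, k ≤ N) →
    lam ^ S.card * f 2 ≤ f (2 ^ (N + 4)) := by
  intro S
  induction S using Finset.strongInduction with
  | _ S ih =>
    intro N hmem hgap hN
    rcases S.eq_empty_or_nonempty with rfl | hSne
    · have := pow_mono_f f hf_mono (show 1 ≤ N + 4 by omega)
      simpa using this
    · set M := S.max' hSne with hMdef
      have hM : M ∈ S := S.max'_mem hSne
      have hM1 : 1 ≤ M := (hmem M hM).1
      have key : lam ^ (S.erase M).card * f 2 ≤ f (2 ^ M) := by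
        rcases (S.erase M).eq_empty_or_nonempty with he | hne
        · rw [he]
          have := pow_mono_f f hf_mono hM1
          simpa using this
        · obtain ⟨k0, hk0⟩ := hne
          have hk0S : k0 ∈ S := Finset.mem_of_mem_erase hk0
          have hk0M : k0 < M :=
            lt_of_le_of_ne (S.le_max' _ hk0S) (Finset.ne_of_mem_erase hk0)
          have h4M : k0 + 4 ≤ M := hgap k0 hk0S M hM hk0M
          have hIH := ih (S.erase M) (Finset.erase_ssubset hM) (M - 4)
            (fun k hk => hmem k (Finset.mem_of_mem_erase hk))
            (fun k hk k' hk' => hgap k (Finset.mem_of_mem_erase hk) k'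
              (Finset.mem_of_mem_erase hk'))
            (fun k hk => by
              have hkS := Finset.mem_of_mem_erase hk
              have hlt : k < M :=
                lt_of_le_of_ne (S.le_max' _ hkS) (Finset.ne_of_mem_erase hk)
              have := hgap k hkS M hM hlt
              omega)
          have hM4 : M - 4 + 4 = M := by omega
          rwa [hM4] at hIH
      have hcard : S.card = (S.erase M).card + 1 := (Finset.card_erase_add_one hM).symm
      have hlam0 : (0:ℝ) < lam := lt_trans one_pos hlam
      calc lam ^ S.card * f 2 = lam * (lam ^ (S.erase M).card * f 2) := by
            rw [hcard, pow_succ]; ring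
        _ ≤ lam * f (2 ^ M) := mul_le_mul_of_nonneg_left key hlam0.le
        _ ≤ f (2 ^ (M + 4)) := (hmem M hM).2
        _ ≤ f (2 ^ (N + 4)) := pow_mono_f f hf_mono (by have := hN M hM; omega)

theorem doubling_scales_lower_density (f : ℝ → ℝ)
    (hf_pos : ∀ r > (0:ℝ), 0 < f r) (hf_mono : MonotoneOn f (Set.Ioi 0))
    (C : ℝ) (hC : 1 ≤ C) (hgrowth : ∀ r ≥ (1:ℝ), f r ≤ C * r ^ C)
    (lam : ℝ) (hlam : 1 < lam) :
    1 - 4 * C * Real.log 2 / Real.log lam ≤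
      Filter.atTop.liminf (fun N : ℕ =>
        (((Finset.Icc 1 N).filter (fun k =>
          ∀ r ∈ Set.Icc ((2:ℝ) ^ k) ((2:ℝ) ^ (k + 2)), f (4 * r) ≤ lam * f r)).card : ℝ)
          / (N : ℝ)) := by
  have hlam0 : (0:ℝ) < lam := lt_trans one_pos hlam
  have hL : 0 < Real.log lam := Real.log_pos hlam
  have hf2 : 0 < f 2 := hf_pos 2 (by norm_num)
  have hC0 : (0:ℝ) < C := lt_of_lt_of_le one_pos hC
  have hbad : ∀ k : ℕ,
      ¬ (∀ r ∈ Set.Icc ((2:ℝ) ^ k) ((2:ℝ) ^ (k + 2)), f (4 * r) ≤ lam * f r) →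
      lam * f (2 ^ k) ≤ f (2 ^ (k + 4)) := by
    intro k hk
    push_neg at hk
    obtain ⟨r, hr, hfr⟩ := hk
    have hr0 : (0:ℝ) < r := lt_of_lt_of_le (by positivity) hr.1
    have h1 : lam * f (2 ^ k) ≤ lam * f r :=
      mul_le_mul_of_nonneg_left
        (hf_mono (Set.mem_Ioi.2 (by positivity)) (Set.mem_Ioi.2 hr0) hr.1) hlam0.le
    have h2 : f (4 * r) ≤ f (2 ^ (k + 4)) := by
      apply hf_mono (Set.mem_Ioi.2 (by positivity)) (Set.mem_Ioi.2 (by positivity))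
      have h2' : (4:ℝ) * r ≤ 4 * 2 ^ (k + 2) := by linarith [hr.2]
      have heq : (4:ℝ) * 2 ^ (k + 2) = 2 ^ (k + 4) := by
        rw [show k + 4 = (k + 2) + 2 by omega, pow_add]; ring
      linarith
    linarith
  set P : ℕ → Prop := fun k =>
    ∀ r ∈ Set.Icc ((2:ℝ) ^ k) ((2:ℝ) ^ (k + 2)), f (4 * r) ≤ lam * f r with hP
  set K : ℝ := Real.log C + 4 * C * Real.log 2 - Real.log (f 2) with hK
  have hmain : ∀ N : ℕ, 1 ≤ N →
      (1 - 4 * C * Real.log 2 / Real.log lam) - (4 * K / Real.log lam) / N ≤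
      (((Finset.Icc 1 N).filter P).card : ℝ) / N := by
    intro N hN1
    set B : Finset ℕ := (Finset.Icc 1 N).filter (fun k => ¬ P k) with hB
    have hclass : ∀ j : ℕ, ((B.filter (fun k => k % 4 = j)).card : ℝ) * Real.log lam ≤
        C * (N + 4) * Real.log 2 + Real.log C - Real.log (f 2) := by
      intro j
      set S := B.filter (fun k => k % 4 = j) with hS
      have hchain := chain_lemma f hf_mono lam hlam S N
        (fun k hk => by
          have hk' := Finset.mem_filter.1 hk
          have hk'' := Finset.mem_filter.1 hk'.1
          exact ⟨(Finset.mem_Icc.1 hk''.1).1, hbad k hk''.2⟩)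
        (fun k hk k' hk' hlt => by
          have h1 := (Finset.mem_filter.1 hk).2
          have h2 := (Finset.mem_filter.1 hk').2
          omega)
        (fun k hk => by
          have hk' := Finset.mem_filter.1 hk
          have hk'' := Finset.mem_filter.1 hk'.1
          exact (Finset.mem_Icc.1 hk''.1).2)
      have hone : (1:ℝ) ≤ 2 ^ (N + 4) := by
        have : (2:ℝ) ^ 0 ≤ 2 ^ (N + 4) := pow_le_pow_right₀ one_le_two (Nat.zero_le _)
        simpa using this
      have hgrow : f (2 ^ (N + 4)) ≤ C * ((2:ℝ) ^ (N + 4)) ^ C := hgrowth _ hone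
      have htot : lam ^ S.card * f 2 ≤ C * ((2:ℝ) ^ (N + 4)) ^ C := le_trans hchain hgrow
      have hlog := Real.log_le_log (by positivity) htot
      rw [Real.log_mul (by positivity) (ne_of_gt hf2), Real.log_pow,
        Real.log_mul (ne_of_gt hC0) (by positivity),
        Real.log_rpow (by positivity), Real.log_pow] at hlog
      push_cast at hlog ⊢
      nlinarith [hlog]
    have hBcard : B.card = ∑ j ∈ Finset.range 4, (B.filter (fun k => k % 4 = j)).card :=
      Finset.card_eq_sum_card_fiberwise
        (fun k _ => Finset.mem_range.2 (Nat.mod_lt _ (by norm_num)))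
    have hβ : (B.card : ℝ) * Real.log lam ≤ 4 * C * Real.log 2 * N + 4 * K := by
      have h0 := hclass 0
      have h1 := hclass 1
      have h2 := hclass 2
      have h3 := hclass 3
      have : (B.card : ℝ) = ((B.filter (fun k => k % 4 = 0)).card : ℝ)
          + ((B.filter (fun k => k % 4 = 1)).card : ℝ)
          + ((B.filter (fun k => k % 4 = 2)).card : ℝ)
          + ((B.filter (fun k => k % 4 = 3)).card : ℝ) := by
        rw [hBcard]
        push_cast [Finset.sum_range_succ]
        ring
      rw [this]
      rw [hK]
      nlinarith [h0, h1, h2, h3]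
    have hsum : ((Finset.Icc 1 N).filter P).card + B.card = N := by
      rw [hB]
      rw [Finset.card_filter_add_card_filter_not, Nat.card_Icc]
      omega
    have hNpos : (0:ℝ) < N := by exact_mod_cast hN1
    have hG : (((Finset.Icc 1 N).filter P).card : ℝ) = N - B.card := by
      have h' : (((Finset.Icc 1 N).filter P).card : ℝ) + (B.card : ℝ) = N := by
        exact_mod_cast congrArg (Nat.cast (R := ℝ)) hsum
      linarith
    rw [hG]
    have hβN : (B.card : ℝ) / N ≤ 4 * C * Real.log 2 / Real.log lam
        + (4 * K / Real.log lam) / N := by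
      have heq : 4 * C * Real.log 2 / Real.log lam + (4 * K / Real.log lam) / N
          = (4 * C * Real.log 2 * N + 4 * K) / (Real.log lam * N) := by
        field_simp
      rw [heq, div_le_div_iff₀ hNpos (by positivity)]
      nlinarith [mul_le_mul_of_nonneg_right hβ hNpos.le]
    have hsub : ((N:ℝ) - B.card) / N = 1 - (B.card : ℝ) / N := by
      field_simp
    rw [hsub]
    linarith
  -- liminf step
  set c : ℝ := 1 - 4 * C * Real.log 2 / Real.log lam with hc
  set bfun : ℕ → ℝ := fun N => c - (4 * K / Real.log lam) / N with hbfun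
  set afun : ℕ → ℝ := fun N : ℕ =>
      (((Finset.Icc 1 N).filter (fun k =>
          ∀ r ∈ Set.Icc ((2:ℝ) ^ k) ((2:ℝ) ^ (k + 2)), f (4 * r) ≤ lam * f r)).card : ℝ)
          / (N : ℝ) with hafun
  have htend : Tendsto bfun atTop (nhds c) := by
    have h0 : Tendsto (fun N : ℕ => (4 * K / Real.log lam) / (N:ℝ)) atTop (nhds 0) :=
      tendsto_const_div_atTop_nhds_zero_nat _
    have := h0.const_sub c
    simpa using this
  have hev : ∀ᶠ N in atTop, bfun N ≤ afun N := by
    filter_upwards [eventually_ge_atTop 1] with N hN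
    exact hmain N hN
  have hbd : IsBoundedUnder (· ≤ ·) atTop afun := by
    refine isBoundedUnder_of ⟨1, fun N => ?_⟩
    rcases Nat.eq_zero_or_pos N with rfl | hN
    · simp [hafun]
    · have hNpos : (0:ℝ) < N := by exact_mod_cast hN
      rw [hafun]
      rw [div_le_one hNpos]
      have := Finset.card_filter_le (Finset.Icc 1 N) (fun k =>
          ∀ r ∈ Set.Icc ((2:ℝ) ^ k) ((2:ℝ) ^ (k + 2)), f (4 * r) ≤ lam * f r)
      have hcard : (Finset.Icc 1 N).card = N := by simp [Nat.card_Icc]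
      exact_mod_cast hcard ▸ this
  calc c = Filter.atTop.liminf bfun := (htend.liminf_eq).symm
    _ ≤ Filter.atTop.liminf afun :=
      liminf_le_liminf hev htend.isBoundedUnder_ge hbd.isCoboundedUnder_ge
end

section
/- Let $a, b > 0$ with $b > a$, let $h : (0,\infty) \to (0,\infty)$ be measurable and regularly varying of index $b$, and let $f : (0,\infty) \to \mathbb{R}$ be differentiable with $f'(r) = \frac{a + \varepsilon_1(r)}{r} f(r) + \frac{A + \varepsilon_2(r)}{r} h(r)$ for some constant $A \in \mathbb{R}$ and functions $\varepsilon_1, \varepsilon_2 \to 0$ as $r \to \infty$. If $|f(r)| = O(h(r))$ as $r \to \infty$, then $f(r) / h(r) \to \frac{A}{b - a}$ as $r \to \infty$. -/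
/-!
Write `u = f / h` and `c = A / (b - a)`. Rescaled to `[1, 2]`, the equation says that the
derivative of `t ↦ f (t r) t ^ (-a) / h r` is `A t ^ (b - a - 1) + o(1)` uniformly in `t`, because
`h (t r) / h r → t ^ b` uniformly on compact sets (the uniform convergence theorem for regularly
varying functions, proved by Egorov's theorem in logarithmic coordinates). The mean value
inequality then gives `u (2 r) - c = 2 ^ (a - b) (u r - c) + o(1)`; since `u` is bounded and
`2 ^ (a - b) < 1`, iterating this contraction forces `u r → c`.
-/

open Real Filter Asymptotics Topology Set MeasureTheory

section UniformConvergence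

variable {ℓ : ℝ → ℝ} {b : ℝ}

lemma exists_measure_le_tendstoUniformlyOn_sub (hℓ : Measurable ℓ)
    (hconv : ∀ u, Tendsto (fun z => ℓ (z + u) - ℓ z) atTop (𝓝 (b * u)))
    {y : ℕ → ℝ} (hy : Tendsto y atTop atTop) (L : ℝ) {δ : ℝ} (hδ : 0 < δ) :
    ∃ t, volume t ≤ ENNReal.ofReal δ ∧
      TendstoUniformlyOn (fun n w => ℓ (y n + w) - ℓ (y n)) (fun w => b * w) atTop
        (Icc 0 L \ t) := by
  obtain ⟨t, -, -, ht, hunif⟩ := tendstoUniformlyOn_of_ae_tendsto (μ := volume) (s := Icc 0 L)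
    (fun n => ((hℓ.comp (measurable_const_add (y n))).sub_const _).stronglyMeasurable)
    (continuous_const.mul continuous_id).stronglyMeasurable measurableSet_Icc
    measure_Icc_lt_top.ne (.of_forall fun w _ => (hconv w).comp hy) hδ
  exact ⟨t, ht, hunif⟩

theorem tendsto_sub_sub_mul_prod_principal_Icc (hℓ : Measurable ℓ)
    (hconv : ∀ u, Tendsto (fun z => ℓ (z + u) - ℓ z) atTop (𝓝 (b * u))) (K : ℝ) :
    Tendsto (fun q : ℝ × ℝ => ℓ (q.1 + q.2) - ℓ q.1 - b * q.2) (atTop ×ˢ 𝓟 (Icc 0 K))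
      (𝓝 0) := by
  rw [Metric.tendsto_nhds]
  intro ε hε
  rw [eventually_prod_principal_iff]
  by_contra hfail
  obtain ⟨x, hx, u, hu, hbad⟩ : ∃ x : ℕ → ℝ, (∀ m : ℕ, (m : ℝ) ≤ x m) ∧ ∃ u : ℕ → ℝ,
      (∀ m, u m ∈ Icc 0 K) ∧ ∀ m, ε ≤ |ℓ (x m + u m) - ℓ (x m) - b * u m| := by
    have := (not_eventually.mp hfail).forall_exists_of_atTop
    choose x hx hbad using fun m : ℕ => this m
    push Not at hbad
    choose u hu hbad using hbad
    exact ⟨x, hx, u, hu, fun m => by simpa [Real.dist_eq] using hbad m⟩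
  have hxtop : Tendsto x atTop atTop := tendsto_atTop_mono hx tendsto_natCast_atTop_atTop
  have hxutop : Tendsto (fun m => x m + u m) atTop atTop :=
    tendsto_atTop_mono (fun m => le_add_of_nonneg_right (hu m).1) hxtop
  obtain ⟨t₁, ht₁, hunif₁⟩ :=
    exists_measure_le_tendstoUniformlyOn_sub hℓ hconv hxtop (K + 2) one_half_pos
  obtain ⟨t₂, ht₂, hunif₂⟩ :=
    exists_measure_le_tendstoUniformlyOn_sub hℓ hconv hxutop 2 one_half_pos
  rw [Metric.tendstoUniformlyOn_iff] at hunif₁ hunif₂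
  obtain ⟨N, hN₁, hN₂⟩ :=
    ((hunif₁ (ε / 2) (half_pos hε)).and (hunif₂ (ε / 2) (half_pos hε))).exists
  -- two sets of measure at most 1/2 cannot cover an interval of length 2
  obtain ⟨w, hw, hwt⟩ : ∃ w ∈ Icc (0 : ℝ) 2, w ∉ t₂ ∪ (u N + ·) ⁻¹' t₁ := by
    by_contra! hcover
    have hvol : ENNReal.ofReal 2 ≤ ENNReal.ofReal (1 / 2) + ENNReal.ofReal (1 / 2) :=
      calc ENNReal.ofReal 2 = volume (Icc (0 : ℝ) 2) := by simp
        _ ≤ volume t₂ + volume ((u N + ·) ⁻¹' t₁) :=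
          (measure_mono hcover).trans (measure_union_le _ _)
        _ ≤ _ := by rw [measure_preimage_add]; exact add_le_add ht₂ ht₁
    rw [← ENNReal.ofReal_add (by norm_num) (by norm_num),
      ENNReal.ofReal_le_ofReal_iff (by norm_num)] at hvol
    norm_num at hvol
  rw [mem_union, not_or, mem_preimage] at hwt
  have h₁ := hN₁ (u N + w) ⟨⟨add_nonneg (hu N).1 hw.1, by linarith [(hu N).2, hw.2]⟩, hwt.2⟩
  have h₂ := hN₂ w ⟨hw, hwt.1⟩
  rw [Real.dist_eq, abs_sub_comm] at h₁ h₂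
  have hsplit : ℓ (x N + u N) - ℓ (x N) - b * u N =
      (ℓ (x N + (u N + w)) - ℓ (x N) - b * (u N + w)) -
        (ℓ (x N + u N + w) - ℓ (x N + u N) - b * w) := by
    rw [← add_assoc]; ring
  have := calc |ℓ (x N + u N) - ℓ (x N) - b * u N|
    _ ≤ |ℓ (x N + (u N + w)) - ℓ (x N) - b * (u N + w)| +
          |ℓ (x N + u N + w) - ℓ (x N + u N) - b * w| := hsplit ▸ abs_sub _ _
    _ < ε / 2 + ε / 2 := add_lt_add h₁ h₂
    _ = ε := add_halves ε
  exact (hbad N).not_gt this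

end UniformConvergence

lemma isBoundedUnder_norm_prod_principal {α X E : Type*} [TopologicalSpace X]
    [SeminormedAddCommGroup E] {l : Filter α} {g : X → E} {s : Set X} (hs : IsCompact s)
    (hg : ContinuousOn g s) : IsBoundedUnder (· ≤ ·) (l ×ˢ 𝓟 s) (fun q => ‖g q.2‖) := by
  obtain ⟨C, hC⟩ := hs.exists_bound_of_continuousOn hg
  exact isBoundedUnder_of_eventually_le (a := C)
    (eventually_prod_principal_iff.2 (.of_forall fun _ t ht => hC t ht))

lemma continuousOn_rpow_const_Icc_one (b Λ : ℝ) : ContinuousOn (fun t : ℝ => t ^ b) (Icc 1 Λ) :=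
  continuousOn_id.rpow_const fun _ ht => Or.inl (zero_lt_one.trans_le ht.1).ne'

theorem tendsto_div_sub_rpow_prod_principal_Icc {h : ℝ → ℝ} {b : ℝ} (hpos : ∀ r > 0, 0 < h r)
    (hmeas : Measurable h)
    (hrv : ∀ lam > (0 : ℝ), Tendsto (fun r => h (lam * r) / h r) atTop (𝓝 (lam ^ b))) (Λ : ℝ) :
    Tendsto (fun q : ℝ × ℝ => h (q.2 * q.1) / h q.1 - q.2 ^ b) (atTop ×ˢ 𝓟 (Icc 1 Λ))
      (𝓝 0) := by
  set ℓ : ℝ → ℝ := fun z => log (h (exp z))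
  have hconv (u : ℝ) : Tendsto (fun z => ℓ (z + u) - ℓ z) atTop (𝓝 (b * u)) := by
    have hlim := ((hrv _ (exp_pos u)).comp tendsto_exp_atTop).log
      (rpow_pos_of_pos (exp_pos u) b).ne'
    rw [log_rpow (exp_pos u), log_exp] at hlim
    refine hlim.congr fun z => ?_
    simp only [ℓ, Function.comp_apply, exp_add, mul_comm (exp z)]
    exact log_div (hpos _ (by positivity)).ne' (hpos _ (exp_pos z)).ne'
  have hlog : Tendsto (Prod.map log log) (atTop ×ˢ 𝓟 (Icc 1 Λ))
      (atTop ×ˢ 𝓟 (Icc 0 (log Λ))) :=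
    tendsto_log_atTop.prodMap <| tendsto_principal_principal.2 fun t ht =>
      ⟨log_nonneg ht.1, log_le_log (by linarith [ht.1]) ht.2⟩
  have hθ := (tendsto_sub_sub_mul_prod_principal_Icc (hmeas.comp measurable_exp).log hconv
    (log Λ)).comp hlog
  have hexp := ((continuous_exp.tendsto 0).comp hθ).sub_const 1
  rw [exp_zero, sub_self] at hexp
  refine (hexp.zero_mul_isBoundedUnder_le (isBoundedUnder_norm_prod_principal isCompact_Icc
    (continuousOn_rpow_const_Icc_one b Λ))).congr' ?_
  filter_upwards [prod_mem_prod (Ioi_mem_atTop 0) (mem_principal_self _)]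
  rintro ⟨r, t⟩ ⟨hr, ht⟩
  have ht0 : 0 < t := by linarith [ht.1]
  show (exp (log (h (exp (log r + log t))) - log (h (exp (log r))) - b * log t) - 1) * t ^ b =
    h (t * r) / h r - t ^ b
  rw [← log_mul hr.ne' ht0.ne', exp_log hr, exp_log (mul_pos hr ht0), mul_comm r, exp_sub, exp_sub,
    exp_log (hpos _ hr), exp_log (hpos _ (mul_pos ht0 hr)), rpow_def_of_pos ht0, mul_comm b]
  field_simp

theorem tendsto_sub_of_tendsto_deriv_sub_prod_principal {ι E : Type*} [NormedAddCommGroup E]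
    [NormedSpace ℝ E] {l : Filter ι} {φ φ' : ι → ℝ → E} {ψ ψ' : ℝ → E} {x y : ℝ} (hxy : x ≤ y)
    (hφ : ∀ᶠ i in l, ∀ t ∈ Icc x y, HasDerivAt (φ i) (φ' i t) t)
    (hψ : ∀ t ∈ Icc x y, HasDerivAt ψ (ψ' t) t)
    (hlim : Tendsto (fun q : ι × ℝ => φ' q.1 q.2 - ψ' q.2) (l ×ˢ 𝓟 (Icc x y)) (𝓝 0)) :
    Tendsto (fun i => φ i y - φ i x) l (𝓝 (ψ y - ψ x)) := by
  rw [Metric.tendsto_nhds]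
  intro ε hε
  have hη : 0 < ε / (y - x + 1) := div_pos hε (by linarith)
  have hsmall := eventually_prod_principal_iff.1 (Metric.tendsto_nhds.1 hlim _ hη)
  filter_upwards [hφ, hsmall] with i hφi hi
  have hmvt := norm_image_sub_le_of_norm_deriv_le_segment' (f := fun t => φ i t - ψ t)
    (fun t ht => ((hφi t ht).sub (hψ t ht)).hasDerivWithinAt)
    (fun t ht => by simpa using (hi t (Ico_subset_Icc_self ht)).le) y (right_mem_Icc.2 hxy)
  rw [dist_eq_norm]
  calc ‖φ i y - φ i x - (ψ y - ψ x)‖ = ‖(φ i y - ψ y) - (φ i x - ψ x)‖ := by congr 1; abel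
    _ ≤ ε / (y - x + 1) * (y - x) := hmvt
    _ < ε := by
      rw [div_mul_eq_mul_div, div_lt_iff₀ (by linarith)]
      nlinarith

theorem tendsto_zero_of_tendsto_comp_mul_sub_smul {E : Type*} [NormedAddCommGroup E]
    [NormedSpace ℝ E] {v : ℝ → E} {c κ : ℝ} (hc : 0 < c) (hκ0 : 0 ≤ κ) (hκ1 : κ < 1)
    (hv : IsBoundedUnder (· ≤ ·) atTop (fun r => ‖v r‖))
    (hrec : Tendsto (fun r => v (c * r) - κ • v r) atTop (𝓝 0)) :
    Tendsto v atTop (𝓝 0) := by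
  have hstep (M δ : ℝ) (hδ : 0 < δ) (hM : ∀ᶠ r in atTop, ‖v r‖ ≤ M) :
      ∀ᶠ r in atTop, ‖v r‖ ≤ κ * M + δ := by
    have hrecδ := hrec.norm.eventually_le_const (by rwa [norm_zero])
    filter_upwards [(tendsto_id.atTop_div_const hc).eventually (hM.and hrecδ)] with s hs
    obtain ⟨hMs, hδs⟩ := hs
    rw [id, mul_div_cancel₀ s hc.ne'] at hδs
    calc ‖v s‖ ≤ ‖v s - κ • v (s / c)‖ + ‖κ • v (s / c)‖ := norm_le_norm_sub_add _ _
      _ ≤ δ + κ * M := by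
        rw [norm_smul, Real.norm_of_nonneg hκ0]
        exact add_le_add hδs (mul_le_mul_of_nonneg_left hMs hκ0)
      _ = κ * M + δ := add_comm _ _
  obtain ⟨M, hM⟩ := hv.eventually_le
  have hiter (η : ℝ) (hη : 0 < η) (n : ℕ) : ∀ᶠ r in atTop, ‖v r‖ ≤ κ ^ n * M + η := by
    induction n with
    | zero => simpa using hM.mono fun r hr => hr.trans (le_add_of_nonneg_right hη.le)
    | succ n ih =>
      -- slack `(1 - κ) η` keeps the error at `η`: `κ (κ ^ n M + η) + (1 - κ) η = κ ^ (n + 1) M + η`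
      convert hstep _ ((1 - κ) * η) (mul_pos (sub_pos.2 hκ1) hη) ih using 3
      ring
  rw [Metric.tendsto_nhds]
  intro ε hε
  have hpow := (tendsto_pow_atTop_nhds_zero_of_lt_one hκ0 hκ1).mul_const M
  rw [zero_mul] at hpow
  obtain ⟨n, hn⟩ := (hpow.eventually_lt_const (half_pos hε)).exists
  filter_upwards [hiter (ε / 2) (half_pos hε) n] with r hr
  rw [dist_zero_right]
  linarith

lemma Asymptotics.IsBigO.isBoundedUnder_norm_div {α : Type*} {l : Filter α} {f g : α → ℝ}
    (hfg : f =O[l] g) (hg : ∀ᶠ x in l, g x ≠ 0) :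
    IsBoundedUnder (· ≤ ·) l (fun x => ‖f x / g x‖) := by
  simpa only [norm_div] using (isBigO_iff_isBoundedUnder_le_div hg).1 hfg

section SignedODE

variable {a b A : ℝ} {h f ε₁ ε₂ : ℝ → ℝ}

lemma hasDerivAt_comp_mul_mul_rpow_div
    (hode : ∀ r > (0 : ℝ), HasDerivAt f ((a + ε₁ r) / r * f r + (A + ε₂ r) / r * h r) r)
    {r t : ℝ} (hr : 0 < r) (ht : 0 < t) :
    HasDerivAt (fun t => f (t * r) * t ^ (-a) / h r)
      (t ^ (-a - 1) * (ε₁ (t * r) * f (t * r) + (A + ε₂ (t * r)) * h (t * r)) / h r) t := by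
  have hf := (hode (t * r) (mul_pos ht hr)).comp t ((hasDerivAt_id t).mul_const r)
  refine ((hf.mul (hasDerivAt_rpow_const (p := -a) (Or.inl ht.ne'))).div_const (h r)).congr_deriv ?_
  rw [show t ^ (-a) = t ^ (-a - 1) * t by rw [← rpow_add_one ht.ne']; ring_nf]
  simp only [Function.comp_apply, id]
  field_simp
  ring

lemma tendsto_rescaled_deriv_sub_prod_principal (hh_pos : ∀ r > (0 : ℝ), 0 < h r)
    (hh_meas : Measurable h)
    (hh_rv : ∀ lam > (0 : ℝ), Tendsto (fun r => h (lam * r) / h r) atTop (𝓝 (lam ^ b)))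
    (hε₁ : Tendsto ε₁ atTop (𝓝 0)) (hε₂ : Tendsto ε₂ atTop (𝓝 0)) (hbound : f =O[atTop] h) :
    Tendsto (fun q : ℝ × ℝ => q.2 ^ (-a - 1) * (ε₁ (q.2 * q.1) * f (q.2 * q.1) +
        (A + ε₂ (q.2 * q.1)) * h (q.2 * q.1)) / h q.1 - A * q.2 ^ (b - a - 1))
      (atTop ×ˢ 𝓟 (Icc 1 2)) (𝓝 0) := by
  have hpos : ∀ᶠ q : ℝ × ℝ in atTop ×ˢ 𝓟 (Icc 1 2), 0 < q.1 ∧ 1 ≤ q.2 :=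
    prod_mem_prod (Ioi_mem_atTop 0) (mem_principal.2 fun t ht => ht.1)
  have hT : Tendsto (fun q : ℝ × ℝ => q.2 * q.1) (atTop ×ˢ 𝓟 (Icc 1 2)) atTop :=
    tendsto_atTop_mono' _ (hpos.mono fun q hq => le_mul_of_one_le_left hq.1.le hq.2) tendsto_fst
  have hρ := tendsto_div_sub_rpow_prod_principal_Icc hh_pos hh_meas hh_rv 2
  have hρ_bdd : IsBoundedUnder (· ≤ ·) (atTop ×ˢ 𝓟 (Icc 1 2))
      (norm ∘ fun q : ℝ × ℝ => h (q.2 * q.1) / h q.1) := by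
    refine (isBigO_one_iff ℝ).1 ?_
    simpa using (hρ.isBigO_one ℝ).add ((isBigO_one_iff ℝ).2 (isBoundedUnder_norm_prod_principal
      isCompact_Icc (continuousOn_rpow_const_Icc_one b 2)))
  have hfh_bdd := (hbound.comp_tendsto hT).isBoundedUnder_norm_div
    ((hT.eventually (eventually_gt_atTop 0)).mono fun q hq => (hh_pos _ hq).ne')
  have hsum := (((hε₁.comp hT).zero_mul_isBoundedUnder_le hfh_bdd).zero_mul_isBoundedUnder_le
    hρ_bdd).add ((hε₂.comp hT).zero_mul_isBoundedUnder_le hρ_bdd) |>.add (hρ.const_mul A)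
  rw [add_zero, mul_zero, add_zero] at hsum
  refine (isBoundedUnder_le_mul_tendsto_zero (isBoundedUnder_norm_prod_principal isCompact_Icc
    (continuousOn_rpow_const_Icc_one (-a - 1) 2)) hsum).congr' ?_
  filter_upwards [hpos]
  rintro ⟨r, t⟩ ⟨hr, ht⟩
  have ht0 : 0 < t := zero_lt_one.trans_le ht
  have := hh_pos _ (mul_pos ht0 hr)
  have := hh_pos _ hr
  simp only [Function.comp_apply]
  rw [show t ^ (b - a - 1) = t ^ (-a - 1) * t ^ b by rw [← rpow_add ht0]; ring_nf]
  field_simp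
  ring

lemma tendsto_doubling_increment (hab : a < b)
    (hode : ∀ r > (0 : ℝ), HasDerivAt f ((a + ε₁ r) / r * f r + (A + ε₂ r) / r * h r) r)
    (hh_pos : ∀ r > (0 : ℝ), 0 < h r) (hh_meas : Measurable h)
    (hh_rv : ∀ lam > (0 : ℝ), Tendsto (fun r => h (lam * r) / h r) atTop (𝓝 (lam ^ b)))
    (hε₁ : Tendsto ε₁ atTop (𝓝 0)) (hε₂ : Tendsto ε₂ atTop (𝓝 0)) (hbound : f =O[atTop] h) :
    Tendsto (fun r => f (2 * r) * 2 ^ (-a) / h r - f r / h r) atTop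
      (𝓝 (A * (2 ^ (b - a) - 1) / (b - a))) := by
  have hba : b - a ≠ 0 := (sub_pos.2 hab).ne'
  have hψ (t : ℝ) (ht : t ∈ Icc (1 : ℝ) 2) :
      HasDerivAt (fun t => A * t ^ (b - a) / (b - a)) (A * t ^ (b - a - 1)) t := by
    refine (((hasDerivAt_rpow_const (p := b - a) (Or.inl (zero_lt_one.trans_le ht.1).ne')).const_mul
      A).div_const (b - a)).congr_deriv ?_
    field_simp
  have hlim := tendsto_sub_of_tendsto_deriv_sub_prod_principal one_le_two
    ((eventually_gt_atTop 0).mono fun r hr t ht =>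
      hasDerivAt_comp_mul_mul_rpow_div hode hr (zero_lt_one.trans_le ht.1)) hψ
    (tendsto_rescaled_deriv_sub_prod_principal hh_pos hh_meas hh_rv hε₁ hε₂ hbound)
  convert hlim using 2
  · simp
  · simp only [one_rpow]; ring

lemma tendsto_div_comp_two_mul_sub_smul (hab : a < b) (hh_pos : ∀ r > (0 : ℝ), 0 < h r)
    (h2 : Tendsto (fun r => h (2 * r) / h r) atTop (𝓝 (2 ^ b)))
    (hu : IsBoundedUnder (· ≤ ·) atTop (fun r => ‖f r / h r‖))
    (hincr : Tendsto (fun r => f (2 * r) * 2 ^ (-a) / h r - f r / h r) atTop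
      (𝓝 (A * (2 ^ (b - a) - 1) / (b - a)))) :
    Tendsto (fun r => (f (2 * r) / h (2 * r) - A / (b - a)) -
      (2 : ℝ) ^ (a - b) • (f r / h r - A / (b - a))) atTop (𝓝 0) := by
  set κ : ℝ := 2 ^ (a - b)
  set D := A * (2 ^ (b - a) - 1) / (b - a)
  have hρ : Tendsto (fun r => 2 ^ a * (h (2 * r) / h r)⁻¹ - κ) atTop (𝓝 0) := by
    have := (h2.inv₀ (rpow_pos_of_pos two_pos b).ne').const_mul (2 ^ a)
    rw [← rpow_neg two_pos.le, ← rpow_add two_pos, ← sub_eq_add_neg] at this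
    exact tendsto_sub_nhds_zero_iff.2 this
  have hκD : κ * D = (1 - κ) * (A / (b - a)) := by
    have : κ * 2 ^ (b - a) = 1 := by rw [← rpow_add two_pos]; simp
    have hba : b - a ≠ 0 := (sub_pos.2 hab).ne'
    simp only [D]
    field_simp
    linear_combination A * this
  have hlim := ((hρ.zero_mul_isBoundedUnder_le hu).add (hρ.mul hincr)).add
    ((tendsto_sub_nhds_zero_iff.2 hincr).const_mul κ)
  rw [zero_mul, mul_zero, add_zero, add_zero] at hlim
  refine hlim.congr' ?_
  filter_upwards [eventually_gt_atTop 0] with r hr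
  have hU : f (2 * r) / h (2 * r) = 2 ^ a * (h (2 * r) / h r)⁻¹ * (f (2 * r) * 2 ^ (-a) / h r) := by
    have := hh_pos r hr
    have := hh_pos (2 * r) (by positivity)
    rw [rpow_neg zero_le_two]
    field_simp
  rw [smul_eq_mul]
  linear_combination -hU - hκD

end SignedODE

theorem signed_ode_analysis_general (a b : ℝ) (hab : a < b)
    (h : ℝ → ℝ) (hh_pos : ∀ r > (0:ℝ), 0 < h r) (hh_meas : Measurable h)
    (hh_rv : ∀ lam > (0:ℝ), Tendsto (fun r => h (lam * r) / h r) atTop (nhds (lam ^ b)))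
    (A : ℝ) (ε₁ ε₂ : ℝ → ℝ)
    (hε₁ : Tendsto ε₁ atTop (nhds 0)) (hε₂ : Tendsto ε₂ atTop (nhds 0))
    (f : ℝ → ℝ)
    (hode : ∀ r > (0:ℝ), HasDerivAt f ((a + ε₁ r) / r * f r + (A + ε₂ r) / r * h r) r)
    (hbound : f =O[atTop] h) :
    Tendsto (fun r => f r / h r) atTop (nhds (A / (b - a))) := by
  have hu := hbound.isBoundedUnder_norm_div
    ((eventually_gt_atTop 0).mono fun r hr => (hh_pos r hr).ne')
  have hv : IsBoundedUnder (· ≤ ·) atTop (fun r => ‖f r / h r - A / (b - a)‖) :=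
    (isBigO_one_iff ℝ).1 (((isBigO_one_iff ℝ).2 hu).sub (isBigO_const_one ℝ _ _))
  have hrec := tendsto_div_comp_two_mul_sub_smul hab hh_pos (hh_rv 2 two_pos) hu
    (tendsto_doubling_increment hab hode hh_pos hh_meas hh_rv hε₁ hε₂ hbound)
  exact tendsto_sub_nhds_zero_iff.1 <| tendsto_zero_of_tendsto_comp_mul_sub_smul two_pos
    (rpow_nonneg zero_le_two _) (rpow_lt_one_of_one_lt_of_neg one_lt_two (sub_neg.2 hab)) hv hrec

theorem signed_ode_analysis (a b : ℝ) (ha : 0 < a) (hab : a < b)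
    (h : ℝ → ℝ) (hh_pos : ∀ r > (0:ℝ), 0 < h r) (hh_meas : Measurable h)
    (hh_rv : ∀ lam > (0:ℝ), Tendsto (fun r => h (lam * r) / h r) atTop (nhds (lam ^ b)))
    (A : ℝ) (ε₁ ε₂ : ℝ → ℝ)
    (hε₁ : Tendsto ε₁ atTop (nhds 0)) (hε₂ : Tendsto ε₂ atTop (nhds 0))
    (f : ℝ → ℝ)
    (hode : ∀ r > (0:ℝ), HasDerivAt f ((a + ε₁ r) / r * f r + (A + ε₂ r) / r * h r) r)
    (hbound : f =O[atTop] h) :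
    Tendsto (fun r => f r / h r) atTop (nhds (A / (b - a))) :=
  signed_ode_analysis_general a b hab h hh_pos hh_meas hh_rv A ε₁ ε₂ hε₁ hε₂ f hode hbound
end
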